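/- arXiv:1512.01792 — 4 statements merged into one kernel-verified Lean document; each statement's English description precedes it below -/
import Mathlib

section
/- Fix γ > 0. Let F_{10}, F_{20} be distributions on [0,∞) and define F_{iγ} by (F_{iγ})̄(x) = e^{-γx}(F_{i0})̄(x) for x ≥ 0. If μ(F_{20}) := ∫₀^∞ (F_{20})̄(y) dy = ∞, then (F_{1γ})̄(x) = o((F_{1γ}*F_{2γ})̄(x)) as x → ∞. -/
open MeasureTheory Filter Set Asymptotics

/-- The tail `F̄(x) = μ((x,∞))` of a distribution `μ` on `ℝ`. -/
noncomputable def tail (μ : MeasureTheory.Measure ℝ) (x : ℝ) : ℝ := (μ (Set.Ioi x)).toReal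

/-- Convolution of two distributions on `ℝ`. -/
noncomputable def mconv (μ ν : MeasureTheory.Measure ℝ) : MeasureTheory.Measure ℝ :=
  MeasureTheory.Measure.map (fun p : ℝ × ℝ => p.1 + p.2) (μ.prod ν)

/-- `iconv μ k` is the `k`-fold convolution `μ^{*k}` (with `μ^{*0} = δ₀`). -/
noncomputable def iconv (μ : MeasureTheory.Measure ℝ) : ℕ → MeasureTheory.Measure ℝ
  | 0 => MeasureTheory.Measure.dirac 0
  | n + 1 => mconv (iconv μ n) μ

/-- The class `L(γ)`: `F̄(x-t) ~ e^{γt} F̄(x)` as `x → ∞`, for every `t`. -/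
def MemL (γ : ℝ) (μ : MeasureTheory.Measure ℝ) : Prop :=
  ∀ t : ℝ, Filter.Tendsto (fun x => tail μ (x - t) / tail μ x) Filter.atTop
    (nhds (Real.exp (γ * t)))

/-- The class `OS`: `limsup_{x→∞} (F*F)̄(x) / F̄(x) < ∞`. -/
def MemOS (μ : MeasureTheory.Measure ℝ) : Prop :=
  Filter.IsBoundedUnder (· ≤ ·) Filter.atTop (fun x => tail (mconv μ μ) x / tail μ x)

open scoped ENNReal Topology

/-! For `0 < v ≤ x` the tilting gives `F̄₁γ(x - v) ≥ e^{γv} F̄₁γ(x)`, because `F̄₁₀` is antitone.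
Conditioning on the second summand therefore yields
`(F₁γ * F₂γ)̄(x) ≥ F̄₁γ(x) ∫_{(0,x]} e^{γv} dF₂γ(v)`, and the integral tends to
`∫_{(0,∞)} e^{γv} dF₂γ(v)`. By the layer-cake formula the latter dominates
`γ ∫₀^∞ e^{γt} F̄₂γ(t) dt = γ ∫₀^∞ F̄₂₀(t) dt = ∞`. -/

lemma tail_nonneg (μ : Measure ℝ) (x : ℝ) : 0 ≤ tail μ x := ENNReal.toReal_nonneg

lemma tail_antitone (μ : Measure ℝ) [IsFiniteMeasure μ] : Antitone (tail μ) := fun _ _ hxy =>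
  ENNReal.toReal_mono (measure_ne_top μ _) (measure_mono (Ioi_subset_Ioi hxy))

lemma ofReal_tail (μ : Measure ℝ) [IsFiniteMeasure μ] (x : ℝ) :
    ENNReal.ofReal (tail μ x) = μ (Ioi x) :=
  ENNReal.ofReal_toReal (measure_ne_top μ _)

instance (μ ν : Measure ℝ) [IsFiniteMeasure μ] [IsFiniteMeasure ν] :
    IsFiniteMeasure (mconv μ ν) := by
  unfold mconv; infer_instance

lemma mconv_Ioi (μ ν : Measure ℝ) [SFinite μ] [SFinite ν] (x : ℝ) :
    mconv μ ν (Ioi x) = ∫⁻ v, μ (Ioi (x - v)) ∂ν := by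
  have hadd : Measurable fun p : ℝ × ℝ => p.1 + p.2 := measurable_fst.add measurable_snd
  rw [mconv, Measure.map_apply hadd measurableSet_Ioi,
    Measure.prod_apply_symm (hadd measurableSet_Ioi)]
  refine lintegral_congr fun v => congrArg μ ?_
  ext u
  simp [sub_lt_iff_lt_add]

lemma exp_mul_tail_le_tail_sub {γ : ℝ} {μ μ₀ : Measure ℝ} [IsFiniteMeasure μ₀]
    (ht : ∀ x, 0 ≤ x → tail μ x = Real.exp (-(γ * x)) * tail μ₀ x)
    {x v : ℝ} (hv : 0 ≤ v) (hvx : v ≤ x) :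
    Real.exp (γ * v) * tail μ x ≤ tail μ (x - v) := by
  rw [ht x (hv.trans hvx), ht (x - v) (sub_nonneg.2 hvx), ← mul_assoc, ← Real.exp_add,
    show γ * v + -(γ * x) = -(γ * (x - v)) by ring]
  exact mul_le_mul_of_nonneg_left (tail_antitone μ₀ (by linarith)) (Real.exp_nonneg _)

lemma ofReal_tail_mul_le_mconv_Ioi {γ : ℝ} {μ μ₀ : Measure ℝ} [IsFiniteMeasure μ]
    [IsFiniteMeasure μ₀] (ν : Measure ℝ) [SFinite ν]
    (ht : ∀ x, 0 ≤ x → tail μ x = Real.exp (-(γ * x)) * tail μ₀ x) (x : ℝ) :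
    ENNReal.ofReal (tail μ x) * ∫⁻ v in Ioc 0 x, ENNReal.ofReal (Real.exp (γ * v)) ∂ν ≤
      mconv μ ν (Ioi x) := by
  rw [mconv_Ioi, mul_comm, ← lintegral_mul_const' _ _ ENNReal.ofReal_ne_top]
  calc ∫⁻ v in Ioc 0 x, ENNReal.ofReal (Real.exp (γ * v)) * ENNReal.ofReal (tail μ x) ∂ν
      ≤ ∫⁻ v in Ioc 0 x, μ (Ioi (x - v)) ∂ν := by
        refine setLIntegral_mono' measurableSet_Ioc fun v hv => ?_
        rw [← ENNReal.ofReal_mul (Real.exp_nonneg _), ← ofReal_tail]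
        exact ENNReal.ofReal_le_ofReal (exp_mul_tail_le_tail_sub ht hv.1.le hv.2)
    _ ≤ ∫⁻ v, μ (Ioi (x - v)) ∂ν := setLIntegral_le_lintegral _ _

lemma setLIntegral_Ioi_enorm_eq_top {μ : Measure ℝ} {f : ℝ → ℝ} {a : ℝ}
    (h : Tendsto (fun x => ∫ y in Ioc a x, f y ∂μ) atTop atTop) :
    ∫⁻ y in Ioi a, ‖f y‖ₑ ∂μ = ∞ := by
  refine top_le_iff.1 (le_of_tendsto' (ENNReal.tendsto_ofReal_atTop.comp h) fun x => ?_)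
  calc ENNReal.ofReal (∫ y in Ioc a x, f y ∂μ) ≤ ‖∫ y in Ioc a x, f y ∂μ‖ₑ :=
        Real.ofReal_le_enorm _
    _ ≤ ∫⁻ y in Ioc a x, ‖f y‖ₑ ∂μ := enorm_integral_le_lintegral_enorm _
    _ ≤ ∫⁻ y in Ioi a, ‖f y‖ₑ ∂μ := lintegral_mono_set Ioc_subset_Ioi_self

lemma tendsto_setLIntegral_Ioc_atTop (μ : Measure ℝ) (f : ℝ → ℝ≥0∞) (a : ℝ) :
    Tendsto (fun x => ∫⁻ y in Ioc a x, f y ∂μ) atTop (𝓝 (∫⁻ y in Ioi a, f y ∂μ)) := by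
  simp_rw [← withDensity_apply f measurableSet_Ioc, ← withDensity_apply f measurableSet_Ioi,
    ← iUnion_Ioc_right a]
  exact tendsto_measure_iUnion_atTop fun _ _ h => Ioc_subset_Ioc_right h

lemma integral_mul_exp_mul (γ v : ℝ) :
    ∫ t in (0 : ℝ)..v, γ * Real.exp (γ * t) = Real.exp (γ * v) - 1 := by
  have hderiv (t : ℝ) : HasDerivAt (fun t => Real.exp (γ * t)) (γ * Real.exp (γ * t)) t := by
    simpa [mul_comm] using ((hasDerivAt_id t).const_mul γ).exp
  rw [intervalIntegral.integral_eq_sub_of_hasDerivAt (fun t _ => hderiv t)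
    ((by fun_prop : Continuous fun t => γ * Real.exp (γ * t)).intervalIntegrable _ _)]
  simp

lemma setLIntegral_measure_Ioi_mul_le (ν : Measure ℝ) {γ : ℝ} (hγ : 0 ≤ γ) :
    ∫⁻ t in Ioi 0, ν (Ioi t) * ENNReal.ofReal (γ * Real.exp (γ * t)) ≤
      ∫⁻ v in Ioi 0, ENNReal.ofReal (Real.exp (γ * v)) ∂ν := by
  have layer := lintegral_comp_eq_lintegral_meas_lt_mul (ν.restrict (Ioi 0)) (f := id)
    (g := fun t => γ * Real.exp (γ * t))
    ((ae_restrict_iff' measurableSet_Ioi).2 (ae_of_all _ fun _ hv => hv.le))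
    aemeasurable_id
    (fun _ _ => (by fun_prop : Continuous fun t => γ * Real.exp (γ * t)).intervalIntegrable _ _)
    (ae_of_all _ fun _ => by positivity)
  calc ∫⁻ t in Ioi 0, ν (Ioi t) * ENNReal.ofReal (γ * Real.exp (γ * t))
      = ∫⁻ t in Ioi 0, ν.restrict (Ioi 0) {a | t < id a} *
          ENNReal.ofReal (γ * Real.exp (γ * t)) := by
        refine setLIntegral_congr_fun measurableSet_Ioi fun t ht => ?_
        rw [Measure.restrict_apply' measurableSet_Ioi]
        congr 2
        exact (inter_eq_left.2 (Ioi_subset_Ioi ht.le)).symm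
    _ = ∫⁻ v in Ioi 0, ENNReal.ofReal (∫ t in (0 : ℝ)..v, γ * Real.exp (γ * t)) ∂ν := layer.symm
    _ ≤ ∫⁻ v in Ioi 0, ENNReal.ofReal (Real.exp (γ * v)) ∂ν := by
        refine lintegral_mono fun v => ENNReal.ofReal_le_ofReal ?_
        rw [integral_mul_exp_mul]
        linarith

lemma setLIntegral_Ioi_exp_mul_eq_top {γ : ℝ} (hγ : 0 < γ) {ν ν₀ : Measure ℝ}
    [IsFiniteMeasure ν] (ht : ∀ x, 0 ≤ x → tail ν x = Real.exp (-(γ * x)) * tail ν₀ x)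
    (hdiv : Tendsto (fun x => ∫ y in Ioc 0 x, tail ν₀ y) atTop atTop) :
    ∫⁻ v in Ioi 0, ENNReal.ofReal (Real.exp (γ * v)) ∂ν = ∞ := by
  refine top_le_iff.1 (le_trans (le_of_eq ?_) (setLIntegral_measure_Ioi_mul_le ν hγ.le))
  calc ∞ = ENNReal.ofReal γ * ∫⁻ t in Ioi 0, ‖tail ν₀ t‖ₑ := by
        rw [setLIntegral_Ioi_enorm_eq_top hdiv, ENNReal.mul_top (ENNReal.ofReal_pos.2 hγ).ne']
    _ = ∫⁻ t in Ioi 0, ENNReal.ofReal γ * ‖tail ν₀ t‖ₑ :=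
        (lintegral_const_mul' _ _ ENNReal.ofReal_ne_top).symm
    _ = ∫⁻ t in Ioi 0, ν (Ioi t) * ENNReal.ofReal (γ * Real.exp (γ * t)) := by
        refine setLIntegral_congr_fun measurableSet_Ioi fun t ht' => ?_
        rw [← ofReal_tail, ht t ht'.le, Real.enorm_eq_ofReal (tail_nonneg _ _),
          ← ENNReal.ofReal_mul hγ.le,
          ← ENNReal.ofReal_mul (mul_nonneg (Real.exp_nonneg _) (tail_nonneg _ _)), Real.exp_neg]
        congr 1
        field_simp

lemma isLittleO_of_ofReal_mul_le {α : Type*} {l : Filter α} {f : α → ℝ} {g I : α → ℝ≥0∞}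
    (hf : 0 ≤ f) (hg : ∀ x, g x ≠ ∞) (hI : Tendsto I l (𝓝 ∞))
    (h : ∀ᶠ x in l, ENNReal.ofReal (f x) * I x ≤ g x) :
    f =o[l] fun x => (g x).toReal := by
  refine isLittleO_iff.2 fun c hc => ?_
  filter_upwards [h, hI.eventually (lt_mem_nhds (ENNReal.ofReal_lt_top (r := c⁻¹)))]
    with x hfg hIx
  have : c⁻¹ * f x ≤ (g x).toReal := by
    refine (ENNReal.ofReal_le_iff_le_toReal (hg x)).1 ?_
    calc ENNReal.ofReal (c⁻¹ * f x) = ENNReal.ofReal (f x) * ENNReal.ofReal c⁻¹ := by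
          rw [mul_comm, ENNReal.ofReal_mul (hf x)]
      _ ≤ ENNReal.ofReal (f x) * I x := by gcongr
      _ ≤ g x := hfg
  rw [Real.norm_of_nonneg (hf x), Real.norm_of_nonneg ENNReal.toReal_nonneg]
  rwa [inv_mul_le_iff₀ hc] at this

theorem stmt14_general (γ : ℝ) (hγ : 0 < γ) (F10 F20 F1γ F2γ : Measure ℝ)
    [IsProbabilityMeasure F10]
    [IsProbabilityMeasure F1γ] [IsProbabilityMeasure F2γ]
    (ht1 : ∀ x : ℝ, 0 ≤ x → tail F1γ x = Real.exp (-(γ * x)) * tail F10 x)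
    (ht2 : ∀ x : ℝ, 0 ≤ x → tail F2γ x = Real.exp (-(γ * x)) * tail F20 x)
    (hdiv : Filter.Tendsto (fun x : ℝ => ∫ y in Set.Ioc 0 x, tail F20 y)
      Filter.atTop Filter.atTop) :
    (fun x => tail F1γ x) =o[Filter.atTop] fun x => tail (mconv F1γ F2γ) x := by
  have hI : Tendsto (fun x => ∫⁻ v in Ioc 0 x, ENNReal.ofReal (Real.exp (γ * v)) ∂F2γ)
      atTop (𝓝 ∞) := by
    simpa only [setLIntegral_Ioi_exp_mul_eq_top hγ ht2 hdiv] using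
      tendsto_setLIntegral_Ioc_atTop F2γ (fun v => ENNReal.ofReal (Real.exp (γ * v))) 0
  exact isLittleO_of_ofReal_mul_le (tail_nonneg F1γ) (fun x => measure_ne_top _ _) hI
    (Eventually.of_forall fun x => ofReal_tail_mul_le_mconv_Ioi F2γ ht1 x)

theorem stmt14 (γ : ℝ) (hγ : 0 < γ) (F10 F20 F1γ F2γ : Measure ℝ)
    [IsProbabilityMeasure F10] [IsProbabilityMeasure F20]
    [IsProbabilityMeasure F1γ] [IsProbabilityMeasure F2γ]
    (hs1 : F10 (Set.Iio 0) = 0) (hs2 : F20 (Set.Iio 0) = 0)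
    (ht1 : ∀ x : ℝ, 0 ≤ x → tail F1γ x = Real.exp (-(γ * x)) * tail F10 x)
    (ht2 : ∀ x : ℝ, 0 ≤ x → tail F2γ x = Real.exp (-(γ * x)) * tail F20 x)
    (hdiv : Filter.Tendsto (fun x : ℝ => ∫ y in Set.Ioc 0 x, tail F20 y)
      Filter.atTop Filter.atTop) :
    (fun x => tail F1γ x) =o[Filter.atTop] fun x => tail (mconv F1γ F2γ) x :=
  stmt14_general γ hγ F10 F20 F1γ F2γ ht1 ht2 hdiv
end

section
/- Fix γ > 0 and let F be the distribution on [0,∞) with tail F̄(x) = 1 for x < 1 and F̄(x) = (e^{-γx} + e^{-γ e^{k+1}})/2 for e^k ≤ x < e^{k+1}, k = 0,1,2,…. Then F ∉ L(γ); in fact, for every t > 0, liminf_{k→∞} F̄(e^{k+1} - 2t)/F̄(e^{k+1} - t) = (e^{2γt}+1)/(e^{γt}+1) < e^{γt}. -/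
open MeasureTheory Filter Set Asymptotics

/-!
Near the right end `b = e^{k+1}` of a block, the tail is `F̄(b - s) = e^{-γb} (e^{γs} + 1) / 2`,
so the ratio `F̄(b - 2t) / F̄(b - t)` is eventually the constant `(e^{2γt} + 1) / (e^{γt} + 1)`.
This is smaller than `e^{γt}` because `e^{γt} > 1`, while `F ∈ L(γ)` would force the ratio to tend
to `e^{γt}` along `x = b - t → ∞`.
-/

open Real

def HasExpBlockTail (γ : ℝ) (G : ℝ → ℝ) : Prop :=
  ∀ k : ℕ, ∀ x : ℝ, exp k ≤ x → x < exp ((k : ℝ) + 1) →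
    G x = (exp (-(γ * x)) + exp (-(γ * exp ((k : ℝ) + 1)))) / 2

lemma Real.exp_le_exp_add_one_sub {x s : ℝ} (hs : s ≤ exp x) : exp x ≤ exp (x + 1) - s := by
  have h2e : (2 : ℝ) ≤ exp 1 := by linarith [exp_one_gt_d9]
  rw [exp_add]
  nlinarith [exp_pos x]

lemma Real.exp_two_mul_add_one_div_lt {γ t : ℝ} (hγ : 0 < γ) (ht : 0 < t) :
    (exp (2 * γ * t) + 1) / (exp (γ * t) + 1) < exp (γ * t) := by
  have hsq : exp (2 * γ * t) = exp (γ * t) * exp (γ * t) := by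
    rw [← exp_add]; ring_nf
  have hone : 1 < exp (γ * t) := one_lt_exp_iff.mpr (mul_pos hγ ht)
  rw [div_lt_iff₀ (by positivity)]
  nlinarith

lemma tendsto_exp_natCast_add_one_sub_atTop (t : ℝ) :
    Tendsto (fun k : ℕ => exp ((k : ℝ) + 1) - t) atTop atTop :=
  tendsto_atTop_add_const_right _ _ <| tendsto_exp_atTop.comp <|
    tendsto_atTop_add_const_right _ 1 tendsto_natCast_atTop_atTop

lemma MemL.tendsto_ratio_exp_natCast_add_one {γ : ℝ} {μ : Measure ℝ} (h : MemL γ μ) (t : ℝ) :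
    Tendsto (fun k : ℕ => tail μ (exp ((k : ℝ) + 1) - 2 * t) / tail μ (exp ((k : ℝ) + 1) - t))
      atTop (nhds (exp (γ * t))) :=
  ((h t).comp (tendsto_exp_natCast_add_one_sub_atTop t)).congr fun k => by
    simp only [Function.comp_apply, sub_sub, two_mul]

namespace HasExpBlockTail

variable {γ : ℝ} {G : ℝ → ℝ}

lemma apply_exp_add_one_sub (h : HasExpBlockTail γ G) (k : ℕ) {s : ℝ} (hs₀ : 0 < s)
    (hs : s ≤ exp k) :
    G (exp ((k : ℝ) + 1) - s) = exp (-(γ * exp ((k : ℝ) + 1))) / 2 * (exp (γ * s) + 1) := by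
  rw [h k _ (exp_le_exp_add_one_sub hs) (by linarith),
    show -(γ * (exp ((k : ℝ) + 1) - s)) = -(γ * exp ((k : ℝ) + 1)) + γ * s by ring, exp_add]
  ring

lemma eventually_ratio_eq (h : HasExpBlockTail γ G) {t : ℝ} (ht : 0 < t) :
    ∀ᶠ k : ℕ in atTop, G (exp ((k : ℝ) + 1) - 2 * t) / G (exp ((k : ℝ) + 1) - t)
      = (exp (2 * γ * t) + 1) / (exp (γ * t) + 1) := by
  filter_upwards [(tendsto_exp_atTop.comp tendsto_natCast_atTop_atTop).eventually_ge_atTop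
    (2 * t)] with k hk
  rw [h.apply_exp_add_one_sub k (by positivity) hk,
    h.apply_exp_add_one_sub k ht (by simp only [Function.comp_apply] at hk; linarith),
    mul_div_mul_left _ _ (by positivity), show γ * (2 * t) = 2 * γ * t by ring]

lemma tendsto_ratio (h : HasExpBlockTail γ G) {t : ℝ} (ht : 0 < t) :
    Tendsto (fun k : ℕ => G (exp ((k : ℝ) + 1) - 2 * t) / G (exp ((k : ℝ) + 1) - t)) atTop
      (nhds ((exp (2 * γ * t) + 1) / (exp (γ * t) + 1))) :=
  tendsto_const_nhds.congr' ((h.eventually_ratio_eq ht).mono fun _ hk => hk.symm)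

end HasExpBlockTail

theorem stmt16_general (γ : ℝ) (hγ : 0 < γ) (F : Measure ℝ)
    (h2 : ∀ k : ℕ, ∀ x : ℝ, Real.exp k ≤ x → x < Real.exp ((k : ℝ) + 1) →
      tail F x = (Real.exp (-(γ * x)) + Real.exp (-(γ * Real.exp ((k : ℝ) + 1)))) / 2) :
    ¬ MemL γ F ∧
    ∀ t > (0 : ℝ),
      Filter.liminf (fun k : ℕ =>
          tail F (Real.exp ((k : ℝ) + 1) - 2 * t) / tail F (Real.exp ((k : ℝ) + 1) - t))
        Filter.atTop = (Real.exp (2 * γ * t) + 1) / (Real.exp (γ * t) + 1) ∧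
      (Real.exp (2 * γ * t) + 1) / (Real.exp (γ * t) + 1) < Real.exp (γ * t) := by
  have hF : HasExpBlockTail γ (tail F) := h2
  refine ⟨fun hL => ?_, fun t ht => ⟨(hF.tendsto_ratio ht).liminf_eq,
    exp_two_mul_add_one_div_lt hγ ht⟩⟩
  have heq := tendsto_nhds_unique (hF.tendsto_ratio one_pos)
    (hL.tendsto_ratio_exp_natCast_add_one 1)
  exact (exp_two_mul_add_one_div_lt hγ one_pos).ne heq

theorem stmt16 (γ : ℝ) (hγ : 0 < γ) (F : Measure ℝ) [IsProbabilityMeasure F]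
    (h1 : ∀ x : ℝ, x < 1 → tail F x = 1)
    (h2 : ∀ k : ℕ, ∀ x : ℝ, Real.exp k ≤ x → x < Real.exp ((k : ℝ) + 1) →
      tail F x = (Real.exp (-(γ * x)) + Real.exp (-(γ * Real.exp ((k : ℝ) + 1)))) / 2) :
    ¬ MemL γ F ∧
    ∀ t > (0 : ℝ),
      Filter.liminf (fun k : ℕ =>
          tail F (Real.exp ((k : ℝ) + 1) - 2 * t) / tail F (Real.exp ((k : ℝ) + 1) - t))
        Filter.atTop = (Real.exp (2 * γ * t) + 1) / (Real.exp (γ * t) + 1) ∧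
      (Real.exp (2 * γ * t) + 1) / (Real.exp (γ * t) + 1) < Real.exp (γ * t) :=
  stmt16_general γ hγ F h2
end

section
/- Let F be the distribution on [0,∞) whose tail is F̄(x) = 1 for x < 1, F̄(x) = 1/(2x - 2n + 1) for 2n-1 ≤ x < 2n, and F̄(x) = 1/(2n+1) for 2n ≤ x < 2n+1, for integers n ≥ 1. Then F is long-tailed, i.e., F̄(x-t) ~ F̄(x) as x → ∞ for every t > 0. -/
open MeasureTheory Filter Set Asymptotics

/-!
Between consecutive odd integers `2n - 1 ≤ x < 2n + 1` the tail equals `1 / d` for some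
`d ∈ [x, x + 1]`, so `1 / (x + 1) ≤ F̄(x) ≤ 1 / x` for `x ≥ 1`. Hence `F̄(x - t) / F̄(x)` is
squeezed between `x / (x - t + 1)` and `(x + 1) / (x - t)`, both of which tend to `1`.
-/

open Topology

theorem tendsto_add_div_add_atTop (a b : ℝ) :
    Tendsto (fun x : ℝ => (x + a) / (x + b)) atTop (𝓝 1) := by
  have h : Tendsto (fun x : ℝ => 1 + (a - b) / (x + b)) atTop (𝓝 1) := by
    simpa using tendsto_const_nhds.add
      (tendsto_const_nhds.div_atTop (tendsto_atTop_add_const_right _ b tendsto_id))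
  refine h.congr' ?_
  filter_upwards [eventually_gt_atTop (-b)] with x hx
  have hxb : x + b ≠ 0 := by linarith
  field_simp
  ring

theorem tendsto_shift_div_of_inv_bounds {g : ℝ → ℝ}
    (hg : ∀ᶠ x in atTop, 1 / (x + 1) ≤ g x ∧ g x ≤ 1 / x) (t : ℝ) :
    Tendsto (fun x => g (x - t) / g x) atTop (𝓝 1) := by
  have hg_shift : ∀ᶠ x in atTop, 1 / (x - t + 1) ≤ g (x - t) ∧ g (x - t) ≤ 1 / (x - t) :=
    tendsto_atTop_add_const_right _ (-t) tendsto_id |>.eventually hg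
  refine tendsto_of_tendsto_of_tendsto_of_le_of_le'
    (tendsto_add_div_add_atTop 0 (1 - t)) (tendsto_add_div_add_atTop 1 (-t)) ?_ ?_ <;>
  filter_upwards [hg, hg_shift, eventually_gt_atTop 0, eventually_gt_atTop t]
    with x ⟨hlo, hhi⟩ ⟨hlo', hhi'⟩ hx htx <;> have hxt : 0 < x - t := sub_pos.2 htx
  · calc (x + 0) / (x + (1 - t)) = 1 / (x - t + 1) / (1 / x) := by
          rw [add_zero, show x + (1 - t) = x - t + 1 by ring]
          field_simp
      _ ≤ g (x - t) / g x :=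
          div_le_div₀ (hlo'.trans' (by positivity)) hlo' (hlo.trans_lt' (by positivity)) hhi
  · calc g (x - t) / g x ≤ 1 / (x - t) / (1 / (x + 1)) :=
          div_le_div₀ (by positivity) hhi' (by positivity) hlo
      _ = (x + 1) / (x + -t) := by
          rw [← sub_eq_add_neg]
          field_simp

theorem one_div_bounds_of_piecewise {g : ℝ → ℝ}
    (hrise : ∀ n : ℕ, 1 ≤ n → ∀ x : ℝ, 2 * (n : ℝ) - 1 ≤ x → x < 2 * (n : ℝ) →
      g x = 1 / (2 * x - 2 * (n : ℝ) + 1))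
    (hflat : ∀ n : ℕ, 1 ≤ n → ∀ x : ℝ, 2 * (n : ℝ) ≤ x → x < 2 * (n : ℝ) + 1 →
      g x = 1 / (2 * (n : ℝ) + 1))
    {x : ℝ} (hx : 1 ≤ x) : 1 / (x + 1) ≤ g x ∧ g x ≤ 1 / x := by
  set n : ℕ := ⌊(x + 1) / 2⌋₊
  have hn_le : (n : ℝ) ≤ (x + 1) / 2 := Nat.floor_le (by linarith)
  have hn_gt : (x + 1) / 2 < (n : ℝ) + 1 := Nat.lt_floor_add_one _
  have hn_pos : 1 ≤ n := Nat.le_floor (by push_cast; linarith)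
  obtain ⟨d, hgd, hxd, hdx⟩ : ∃ d : ℝ, g x = 1 / d ∧ x ≤ d ∧ d ≤ x + 1 := by
    by_cases hx2 : x < 2 * (n : ℝ)
    · exact ⟨_, hrise n hn_pos x (by linarith) hx2, by linarith, by linarith⟩
    · exact ⟨_, hflat n hn_pos x (by linarith) (by linarith), by linarith, by linarith⟩
  rw [hgd]
  exact ⟨one_div_le_one_div_of_le (by linarith) hdx, one_div_le_one_div_of_le (by linarith) hxd⟩

theorem stmt17_general (F : Measure ℝ)
    (h2 : ∀ n : ℕ, 1 ≤ n → ∀ x : ℝ, 2 * (n : ℝ) - 1 ≤ x → x < 2 * (n : ℝ) →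
      tail F x = 1 / (2 * x - 2 * (n : ℝ) + 1))
    (h3 : ∀ n : ℕ, 1 ≤ n → ∀ x : ℝ, 2 * (n : ℝ) ≤ x → x < 2 * (n : ℝ) + 1 →
      tail F x = 1 / (2 * (n : ℝ) + 1)) :
    ∀ t > (0 : ℝ),
      Filter.Tendsto (fun x => tail F (x - t) / tail F x) Filter.atTop (nhds 1) := fun t _ =>
  tendsto_shift_div_of_inv_bounds
    ((eventually_ge_atTop 1).mono fun _ hx => one_div_bounds_of_piecewise h2 h3 hx) t

theorem stmt17 (F : Measure ℝ) [IsProbabilityMeasure F]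
    (h1 : ∀ x : ℝ, x < 1 → tail F x = 1)
    (h2 : ∀ n : ℕ, 1 ≤ n → ∀ x : ℝ, 2 * (n : ℝ) - 1 ≤ x → x < 2 * (n : ℝ) →
      tail F x = 1 / (2 * x - 2 * (n : ℝ) + 1))
    (h3 : ∀ n : ℕ, 1 ≤ n → ∀ x : ℝ, 2 * (n : ℝ) ≤ x → x < 2 * (n : ℝ) + 1 →
      tail F x = 1 / (2 * (n : ℝ) + 1)) :
    ∀ t > (0 : ℝ),
      Filter.Tendsto (fun x => tail F (x - t) / tail F x) Filter.atTop (nhds 1) :=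
  stmt17_general F h2 h3
end

section
/- Let F₀ be the distribution on [0,∞) of ξ = η(1+U), where U is uniform on (0,1) independent of η, P(η = aₙ) = C aₙ^{-α} with aₙ = a^{rⁿ}, r = 1 + 1/α, α ∈ (3/2, (√5+1)/2), a > 1 with a^r > 8a, and C the normalizing constant. Then F₀ has finite mean, F₀ ∉ L (since F̄₀(2aₙ - 1)/F̄₀(2aₙ) = 2 for large n), and F₀ ∈ OS. -/
open MeasureTheory Filter Set Asymptotics

/-!
On `[aₙ, aₙ₊₁)` the tail of `F₀` is `C Sₙ₊₁ + D (2aₙ - x)⁺` with slope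
`D = C aₙ^{-α-1} = C aₙ₊₁^{-α}`, where `Sₙ = ∑_{i ≥ n} aᵢ^{-α}` is comparable to `aₙ^{-α}` because
`aₙ₊₁ ≥ 8aₙ`. Hence `F̄₀(2aₙ - 1) / F̄₀(2aₙ) = 1 + aₙ₊₁^{-α} / Sₙ₊₁ → 2`, so `F₀ ∉ L`.

The mean is finite because `F̄₀(t) ≤ P(2η > t)` and `E η = C ∑ aᵢ^{1-α} < ∞`.

For `OS` it suffices that `F̄₀(x - b) ≤ 2 (1 + |b|) F̄₀(x)` for large `x` and `b ≤ x/2`: integrating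
this against `F₀` bounds the part of `{X + Y > x}` where one summand is at most `x/2`, and Markov's
inequality bounds `F̄₀(x/2)²`. The local bound holds because `F̄₀` is `D`-Lipschitz on `[aₙ, aₙ₊₁)`
with `D ≤ F̄₀(x)`, while if `x - b` drops below `aₙ` then `b ≥ x - aₙ` and
`F̄₀(x - b) ≤ C Sₙ ≤ 2aₙD ≤ 2 (1 + b) F̄₀(x)`.
-/

namespace OSNotLongTailed

open Real Topology
open scoped ENNReal

section Tails

variable (μ : Measure ℝ)

lemma ofReal_tail [IsFiniteMeasure μ] (x : ℝ) : ENNReal.ofReal (tail μ x) = μ (Ioi x) :=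
  ENNReal.ofReal_toReal (measure_ne_top μ _)

lemma tail_antitone [IsFiniteMeasure μ] : Antitone (tail μ) := fun _ _ hxy =>
  ENNReal.toReal_mono (measure_ne_top μ _) (measure_mono (Ioi_subset_Ioi hxy))

lemma tail_le_one [IsProbabilityMeasure μ] (x : ℝ) : tail μ x ≤ 1 :=
  ENNReal.toReal_le_of_le_ofReal zero_le_one (by simpa using prob_le_one)

lemma mconv_self_Ioi_le [SFinite μ] (x : ℝ) :
    mconv μ μ (Ioi x) ≤ 2 * ∫⁻ b in Iic (x / 2), μ (Ioi (x - b)) ∂μ + μ (Ioi (x / 2)) ^ 2 := by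
  have hadd : Measurable fun p : ℝ × ℝ => p.1 + p.2 := measurable_fst.add measurable_snd
  set S := {p : ℝ × ℝ | x < p.1 + p.2}
  have hS : MeasurableSet S := measurableSet_lt measurable_const hadd
  have hcover : S ⊆ (S ∩ univ ×ˢ Iic (x / 2) ∪ S ∩ Iic (x / 2) ×ˢ univ) ∪
      Ioi (x / 2) ×ˢ Ioi (x / 2) := by
    intro p hp
    by_cases h2 : p.2 ≤ x / 2
    · exact Or.inl (Or.inl ⟨hp, trivial, h2⟩)
    by_cases h1 : p.1 ≤ x / 2
    · exact Or.inl (Or.inr ⟨hp, h1, trivial⟩)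
    · exact Or.inr ⟨not_le.1 h1, not_le.1 h2⟩
  have hsnd : (μ.prod μ) (S ∩ univ ×ˢ Iic (x / 2)) = ∫⁻ b in Iic (x / 2), μ (Ioi (x - b)) ∂μ := by
    rw [← Measure.restrict_apply hS, ← Measure.prod_restrict, Measure.restrict_univ,
      Measure.prod_apply_symm hS]
    congr! with b
    ext y
    simp [S, sub_lt_iff_lt_add]
  have hfst : (μ.prod μ) (S ∩ Iic (x / 2) ×ˢ univ) = ∫⁻ b in Iic (x / 2), μ (Ioi (x - b)) ∂μ := by
    rw [← Measure.restrict_apply hS, ← Measure.prod_restrict, Measure.restrict_univ,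
      Measure.prod_apply hS]
    congr! with b
    ext y
    simp [S, sub_lt_iff_lt_add']
  calc mconv μ μ (Ioi x) = (μ.prod μ) S := Measure.map_apply hadd measurableSet_Ioi
    _ ≤ _ := measure_mono hcover
    _ ≤ _ := (measure_union_le _ _).trans (add_le_add_left (measure_union_le _ _) _)
    _ = _ := by rw [hsnd, hfst, Measure.prod_prod, two_mul, sq]

lemma lintegral_ofReal_le_tsum_of_meas_Ioi_le (hμ : ∀ᵐ y ∂μ, 0 ≤ y)
    (c : ℕ → ℝ≥0∞) (s : ℕ → ℝ)
    (h : ∀ t > 0, μ (Ioi t) ≤ ∑' i, (Iio (s i)).indicator (fun _ => c i) t) :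
    ∫⁻ y, ENNReal.ofReal y ∂μ ≤ ∑' i, c i * ENNReal.ofReal (s i) := by
  rw [lintegral_eq_lintegral_meas_lt μ hμ aemeasurable_id]
  calc ∫⁻ t in Ioi 0, μ {y | t < y} ≤ ∫⁻ t in Ioi 0, ∑' i, (Iio (s i)).indicator (fun _ => c i) t :=
        setLIntegral_mono' measurableSet_Ioi h
    _ = ∑' i, ∫⁻ t in Ioi 0, (Iio (s i)).indicator (fun _ => c i) t :=
        lintegral_tsum fun i => (measurable_const.indicator measurableSet_Iio).aemeasurable
    _ = ∑' i, c i * ENNReal.ofReal (s i) := by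
        congr! with i
        rw [lintegral_indicator_const measurableSet_Iio, Measure.restrict_apply measurableSet_Iio,
          Iio_inter_Ioi, Real.volume_Ioo, sub_zero]

lemma mconv_self_Ioi_le_of_meas_Ioi_sub_le [IsProbabilityMeasure μ] {x : ℝ}
    (hx : 0 ≤ x) {c : ℝ≥0∞} (hc : ∀ b ≤ x / 2, μ (Ioi (x - b)) ≤ c * (1 + ‖b‖ₑ)) :
    mconv μ μ (Ioi x) ≤ 3 * (c * (1 + ∫⁻ y, ‖y‖ₑ ∂μ)) := by
  set M := ∫⁻ y, ‖y‖ₑ ∂μ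
  have hnear : ∫⁻ b in Iic (x / 2), μ (Ioi (x - b)) ∂μ ≤ c * (1 + M) :=
    calc ∫⁻ b in Iic (x / 2), μ (Ioi (x - b)) ∂μ ≤ ∫⁻ b in Iic (x / 2), c * (1 + ‖b‖ₑ) ∂μ :=
          setLIntegral_mono' measurableSet_Iic hc
      _ ≤ ∫⁻ b, c * (1 + ‖b‖ₑ) ∂μ := setLIntegral_le_lintegral _ _
      _ = c * (1 + M) := by
          rw [lintegral_const_mul c (f := fun b : ℝ => 1 + ‖b‖ₑ) (by fun_prop),
            lintegral_add_left measurable_const, lintegral_const, measure_univ, one_mul]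
  have hmarkov : ENNReal.ofReal (x / 2) * μ (Ioi (x / 2)) ≤ M := by
    refine le_trans ?_
      (mul_meas_ge_le_lintegral₀ measurable_enorm.aemeasurable (ENNReal.ofReal (x / 2)))
    gcongr
    intro y (hy : x / 2 < y)
    show ENNReal.ofReal (x / 2) ≤ ‖y‖ₑ
    rw [enorm_eq_ofReal_abs]
    exact ENNReal.ofReal_le_ofReal (hy.le.trans (le_abs_self y))
  have hfar : μ (Ioi (x / 2)) ^ 2 ≤ c * (1 + M) := by
    have hhalf := hc (x / 2) le_rfl
    rw [sub_half, enorm_eq_ofReal (by positivity)] at hhalf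
    calc μ (Ioi (x / 2)) ^ 2 ≤ c * (1 + ENNReal.ofReal (x / 2)) * μ (Ioi (x / 2)) := by
          rw [sq]; gcongr
      _ = c * (μ (Ioi (x / 2)) + ENNReal.ofReal (x / 2) * μ (Ioi (x / 2))) := by ring
      _ ≤ c * (1 + M) := by gcongr; exact prob_le_one
  calc mconv μ μ (Ioi x) ≤ 2 * (c * (1 + M)) + c * (1 + M) :=
        (mconv_self_Ioi_le μ x).trans (by gcongr)
    _ = 3 * (c * (1 + M)) := by ring

lemma memOS_of_tail_sub_le [IsProbabilityMeasure μ]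
    (hμ : Integrable (fun y : ℝ => y) μ) {K : ℝ} (hK : 0 ≤ K)
    (hloc : ∀ᶠ x in atTop, ∀ b ≤ x / 2, tail μ (x - b) ≤ K * (1 + |b|) * tail μ x) :
    MemOS μ := by
  have hM : ∫⁻ y, ‖y‖ₑ ∂μ ≠ ⊤ := hμ.2.ne
  refine ⟨3 * K * (1 + (∫⁻ y, ‖y‖ₑ ∂μ).toReal), eventually_map.2 ?_⟩
  filter_upwards [hloc, eventually_ge_atTop 0] with x hx hx0
  have hX : 0 ≤ tail μ x := ENNReal.toReal_nonneg
  have hconv := mconv_self_Ioi_le_of_meas_Ioi_sub_le μ hx0 (c := ENNReal.ofReal (K * tail μ x))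
    fun b hb => by
      rw [← ofReal_tail, enorm_eq_ofReal_abs, ← ENNReal.ofReal_one,
        ← ENNReal.ofReal_add zero_le_one (abs_nonneg b), ← ENNReal.ofReal_mul (by positivity)]
      exact ENNReal.ofReal_le_ofReal ((hx b hb).trans_eq (by ring))
  rw [← ENNReal.ofReal_toReal hM, ← ENNReal.ofReal_one, ← ENNReal.ofReal_add zero_le_one
    ENNReal.toReal_nonneg, ← ENNReal.ofReal_mul (by positivity), ← ENNReal.ofReal_ofNat 3,
    ← ENNReal.ofReal_mul (by norm_num)] at hconv
  exact div_le_of_le_mul₀ hX (by positivity)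
    (ENNReal.toReal_le_of_le_ofReal (by positivity) (hconv.trans_eq (by ring_nf)))

end Tails

lemma exists_le_lt_succ_of_tendsto {f : ℕ → ℝ} (hf : Tendsto f atTop atTop) {x : ℝ}
    (hx : f 0 ≤ x) : ∃ n, f n ≤ x ∧ x < f (n + 1) := by
  classical
  have hex : ∃ m, x < f m := (hf.eventually_gt_atTop x).exists
  obtain ⟨n, hn⟩ : ∃ n, Nat.find hex = n + 1 :=
    Nat.exists_eq_add_one.2 (Nat.pos_of_ne_zero fun h0 => (Nat.find_spec hex).not_ge (h0 ▸ hx))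
  exact ⟨n, not_lt.1 (Nat.find_min hex (hn ▸ n.lt_succ_self)), hn ▸ Nat.find_spec hex⟩

noncomputable def aseq (a α : ℝ) (n : ℕ) : ℝ := a ^ ((1 + 1 / α) ^ n)

noncomputable def tailSum (a α : ℝ) (n : ℕ) : ℝ := ∑' i : ℕ, aseq a α (n + i) ^ (-α)

noncomputable def normConst (a α : ℝ) : ℝ := (∑' n : ℕ, aseq a α n ^ (-α))⁻¹

lemma normConst_eq (a α : ℝ) : normConst a α = (tailSum a α 0)⁻¹ := by
  simp [normConst, tailSum]

structure Admissible (α a : ℝ) : Prop where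
  one_lt_alpha : 1 < α
  one_lt_a : 1 < a
  eight_mul_lt : 8 * a < a ^ (1 + 1 / α)

namespace Admissible

variable {α a : ℝ}

lemma alpha_pos (h : Admissible α a) : 0 < α := one_pos.trans h.one_lt_alpha

lemma a_pos (h : Admissible α a) : 0 < a := one_pos.trans h.one_lt_a

lemma aseq_pos (h : Admissible α a) (n : ℕ) : 0 < aseq a α n := rpow_pos_of_pos h.a_pos _

lemma a_le_aseq (h : Admissible α a) (n : ℕ) : a ≤ aseq a α n := by
  have := h.alpha_pos
  simpa [aseq] using rpow_le_rpow_of_exponent_le h.one_lt_a.le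
    (one_le_pow₀ (le_add_of_nonneg_right (by positivity)) : 1 ≤ (1 + 1 / α) ^ n)

lemma aseq_succ (h : Admissible α a) (n : ℕ) : aseq a α (n + 1) = aseq a α n ^ (1 + 1 / α) := by
  rw [aseq, aseq, pow_succ, rpow_mul h.a_pos.le]

lemma eight_lt_rpow (h : Admissible α a) : 8 < a ^ (1 / α) := by
  have := h.alpha_pos
  have h8 := h.eight_mul_lt
  rw [rpow_one_add' h.a_pos.le (by positivity), mul_comm 8] at h8
  exact lt_of_mul_lt_mul_left h8 h.a_pos.le

lemma eight_mul_aseq_le (h : Admissible α a) (n : ℕ) : 8 * aseq a α n ≤ aseq a α (n + 1) := by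
  have := h.alpha_pos
  have h8 : 8 ≤ aseq a α n ^ (1 / α) :=
    h.eight_lt_rpow.le.trans (rpow_le_rpow h.a_pos.le (h.a_le_aseq n) (by positivity))
  rw [h.aseq_succ, rpow_one_add' (h.aseq_pos n).le (by positivity)]
  nlinarith [h.aseq_pos n]

lemma aseq_mono (h : Admissible α a) : Monotone (aseq a α) :=
  monotone_nat_of_le_succ fun n => by linarith [h.eight_mul_aseq_le n, h.aseq_pos n]

lemma pow_mul_aseq_le (h : Admissible α a) (n i : ℕ) : 8 ^ i * aseq a α n ≤ aseq a α (n + i) := by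
  induction i with
  | zero => simp
  | succ i ih =>
    calc 8 ^ (i + 1) * aseq a α n = 8 * (8 ^ i * aseq a α n) := by ring
      _ ≤ 8 * aseq a α (n + i) := by linarith
      _ ≤ aseq a α (n + (i + 1)) := h.eight_mul_aseq_le (n + i)

lemma tendsto_aseq (h : Admissible α a) : Tendsto (aseq a α) atTop atTop := by
  refine tendsto_atTop_mono (fun n => ?_)
    (tendsto_pow_atTop_atTop_of_one_lt (by norm_num : (1 : ℝ) < 8))
  calc (8 : ℝ) ^ n ≤ 8 ^ n * aseq a α 0 :=
        le_mul_of_one_le_right (by positivity) (by simpa [aseq] using h.one_lt_a.le)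
    _ ≤ aseq a α n := by simpa using h.pow_mul_aseq_le 0 n

lemma aseq_rpow_neg_le (h : Admissible α a) {β : ℝ} (hβ : 0 ≤ β) (n i : ℕ) :
    aseq a α (n + i) ^ (-β) ≤ ((8 : ℝ) ^ (-β)) ^ i * aseq a α n ^ (-β) := by
  calc aseq a α (n + i) ^ (-β) ≤ (8 ^ i * aseq a α n) ^ (-β) :=
        rpow_le_rpow_of_nonpos (by have := h.aseq_pos n; positivity) (h.pow_mul_aseq_le n i)
          (neg_nonpos.2 hβ)
    _ = ((8 : ℝ) ^ (-β)) ^ i * aseq a α n ^ (-β) := by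
        rw [mul_rpow (by positivity) (h.aseq_pos n).le, rpow_pow_comm (by norm_num)]

lemma summable_aseq_rpow_neg (h : Admissible α a) {β : ℝ} (hβ : 0 < β) (n : ℕ) :
    Summable fun i => aseq a α (n + i) ^ (-β) :=
  .of_nonneg_of_le (fun i => (rpow_pos_of_pos (h.aseq_pos _) _).le) (h.aseq_rpow_neg_le hβ.le n)
    ((summable_geometric_of_lt_one (by positivity)
      (rpow_lt_one_of_one_lt_of_neg (by norm_num) (by linarith))).mul_right _)

lemma aseq_succ_rpow_neg (h : Admissible α a) (n : ℕ) :
    aseq a α (n + 1) ^ (-α) = aseq a α n ^ (-(α + 1)) := by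
  rw [h.aseq_succ, ← rpow_mul (h.aseq_pos n).le]
  congr 1
  field_simp [h.alpha_pos.ne']

lemma rpow_neg_succ_mul_aseq (h : Admissible α a) (n : ℕ) :
    aseq a α n ^ (-(α + 1)) * aseq a α n = aseq a α n ^ (-α) := by
  rw [← rpow_add_one (h.aseq_pos n).ne']
  ring_nf

lemma summable_tailSum (h : Admissible α a) (n : ℕ) :
    Summable fun i => aseq a α (n + i) ^ (-α) :=
  h.summable_aseq_rpow_neg h.alpha_pos n

lemma tailSum_succ (h : Admissible α a) (n : ℕ) :
    tailSum a α n = aseq a α n ^ (-α) + tailSum a α (n + 1) := by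
  rw [tailSum, (h.summable_tailSum n).tsum_eq_zero_add, tailSum]
  simp only [add_zero, ← add_assoc, add_right_comm n _ 1]

lemma tailSum_nonneg (h : Admissible α a) (n : ℕ) : 0 ≤ tailSum a α n :=
  tsum_nonneg fun _ => (rpow_pos_of_pos (h.aseq_pos _) _).le

lemma rpow_neg_le_tailSum (h : Admissible α a) (n : ℕ) : aseq a α n ^ (-α) ≤ tailSum a α n := by
  linarith [h.tailSum_succ n, h.tailSum_nonneg (n + 1)]

lemma tailSum_pos (h : Admissible α a) (n : ℕ) : 0 < tailSum a α n :=
  (rpow_pos_of_pos (h.aseq_pos n) _).trans_le (h.rpow_neg_le_tailSum n)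

lemma tailSum_le (h : Admissible α a) (n : ℕ) : tailSum a α n ≤ 2 * aseq a α n ^ (-α) := by
  have hq : (8 : ℝ) ^ (-α) ≤ 1 / 2 :=
    (rpow_le_rpow_of_exponent_le (by norm_num) (by linarith [h.one_lt_alpha] : -α ≤ -1)).trans
      (by norm_num)
  have hq0 : (0 : ℝ) ≤ 8 ^ (-α) := by positivity
  calc tailSum a α n ≤ ∑' i : ℕ, ((8 : ℝ) ^ (-α)) ^ i * aseq a α n ^ (-α) :=
        (h.summable_tailSum n).tsum_le_tsum (h.aseq_rpow_neg_le h.alpha_pos.le n)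
          ((summable_geometric_of_lt_one hq0 (by linarith)).mul_right _)
    _ = (1 - 8 ^ (-α))⁻¹ * aseq a α n ^ (-α) := by
        rw [tsum_mul_right, tsum_geometric_of_lt_one hq0 (by linarith)]
    _ ≤ 2 * aseq a α n ^ (-α) := by
        gcongr
        · exact (rpow_pos_of_pos (h.aseq_pos n) _).le
        · rw [inv_le_comm₀ (by linarith) (by norm_num)]
          linarith

lemma normConst_mul_tailSum_zero (h : Admissible α a) : normConst a α * tailSum a α 0 = 1 :=
  normConst_eq a α ▸ inv_mul_cancel₀ (h.tailSum_pos 0).ne'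

lemma normConst_pos (h : Admissible α a) : 0 < normConst a α :=
  normConst_eq a α ▸ inv_pos.2 (h.tailSum_pos 0)

lemma summable_aseq_mul_rpow_neg (h : Admissible α a) :
    Summable fun i => aseq a α i * aseq a α i ^ (-α) :=
  (h.summable_aseq_rpow_neg (sub_pos.2 h.one_lt_alpha) 0).congr fun i => by
    rw [zero_add, mul_comm, ← rpow_add_one (h.aseq_pos i).ne']
    ring_nf

lemma tendsto_tailSum_div_rpow_neg (h : Admissible α a) :
    Tendsto (fun n => tailSum a α n / aseq a α n ^ (-α)) atTop (𝓝 1) := by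
  have hbound : ∀ n, 1 ≤ tailSum a α n / aseq a α n ^ (-α) ∧
      tailSum a α n / aseq a α n ^ (-α) ≤ 1 + 2 * (aseq a α n)⁻¹ := by
    intro n
    have hv := rpow_pos_of_pos (h.aseq_pos n) (-(α + 1))
    have hA := h.aseq_pos n
    have hnext : tailSum a α (n + 1) ≤ 2 * aseq a α n ^ (-(α + 1)) :=
      h.aseq_succ_rpow_neg n ▸ h.tailSum_le (n + 1)
    rw [← h.rpow_neg_succ_mul_aseq, h.tailSum_succ, ← h.rpow_neg_succ_mul_aseq,
      le_div_iff₀ (by positivity), div_le_iff₀ (by positivity)]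
    constructor
    · linarith [h.tailSum_nonneg (n + 1)]
    · field_simp
      nlinarith
  have hlim : Tendsto (fun n => 1 + 2 * (aseq a α n)⁻¹) atTop (𝓝 1) := by
    simpa using tendsto_const_nhds.add (h.tendsto_aseq.inv_tendsto_atTop.const_mul 2)
  exact tendsto_of_tendsto_of_tendsto_of_le_of_le tendsto_const_nhds hlim
    (fun n => (hbound n).1) (fun n => (hbound n).2)

end Admissible

def TailFormula (α a : ℝ) (μ : Measure ℝ) : Prop :=
  ∀ n x, aseq a α n ≤ x → x < aseq a α (n + 1) →
    tail μ x = normConst a α * tailSum a α (n + 1) +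
      normConst a α * aseq a α n ^ (-(α + 1)) * max (2 * aseq a α n - x) 0

namespace TailFormula

variable {α a : ℝ} {μ : Measure ℝ}

lemma of_pieces (h : Admissible α a)
    (hlin : ∀ n x, aseq a α n ≤ x → x < 2 * aseq a α n →
      tail μ x = (∑' i, normConst a α * aseq a α (n + i) ^ (-α)) -
        normConst a α * aseq a α n ^ (-(α + 1)) * (x - aseq a α n))
    (hconst : ∀ n x, 2 * aseq a α n ≤ x → x < aseq a α (n + 1) →
      tail μ x = ∑' i, normConst a α * aseq a α (n + 1 + i) ^ (-α)) :
    TailFormula α a μ := by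
  intro n x hx1 hx2
  rcases lt_or_ge x (2 * aseq a α n) with hlt | hge
  · rw [hlin n x hx1 hlt, tsum_mul_left, ← tailSum, h.tailSum_succ, max_eq_left (by linarith),
      ← h.rpow_neg_succ_mul_aseq]
    ring
  · rw [hconst n x hge hx2, tsum_mul_left, ← tailSum, max_eq_right (by linarith)]
    ring

lemma tail_two_mul_aseq (hF : TailFormula α a μ) (h : Admissible α a) (n : ℕ) :
    tail μ (2 * aseq a α n) = normConst a α * tailSum a α (n + 1) := by
  rw [hF n _ (by linarith [h.aseq_pos n]) (by linarith [h.eight_mul_aseq_le n, h.aseq_pos n])]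
  simp

lemma tail_two_mul_aseq_sub_one (hF : TailFormula α a μ) (h : Admissible α a) (n : ℕ) :
    tail μ (2 * aseq a α n - 1) =
      normConst a α * tailSum a α (n + 1) + normConst a α * aseq a α (n + 1) ^ (-α) := by
  have hA : 1 < aseq a α n := h.one_lt_a.trans_le (h.a_le_aseq n)
  rw [hF n _ (by linarith) (by linarith [h.eight_mul_aseq_le n]), h.aseq_succ_rpow_neg]
  norm_num

lemma tail_le_of_two_mul_aseq_le [IsFiniteMeasure μ] (hF : TailFormula α a μ)
    (h : Admissible α a) {n : ℕ} {t : ℝ} (ht : 2 * aseq a α n ≤ t) :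
    tail μ t ≤ normConst a α * tailSum a α (n + 1) :=
  hF.tail_two_mul_aseq h n ▸ tail_antitone μ ht

lemma exists_tail_le [IsProbabilityMeasure μ] (hF : TailFormula α a μ) (h : Admissible α a)
    (t : ℝ) : ∃ m, t < 2 * aseq a α m ∧ tail μ t ≤ normConst a α * tailSum a α m := by
  rcases lt_or_ge t (2 * aseq a α 0) with ht | ht
  · exact ⟨0, ht, (tail_le_one μ t).trans_eq h.normConst_mul_tailSum_zero.symm⟩
  · obtain ⟨n, hn1, hn2⟩ :=
      exists_le_lt_succ_of_tendsto (h.tendsto_aseq.const_mul_atTop two_pos) ht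
    exact ⟨n + 1, hn2, hF.tail_le_of_two_mul_aseq_le h hn1⟩

/-- `F₀` is stochastically dominated by the law of `2η`. -/
lemma meas_Ioi_le_tsum_indicator [IsProbabilityMeasure μ] (hF : TailFormula α a μ)
    (h : Admissible α a) (t : ℝ) :
    μ (Ioi t) ≤ ∑' i, (Iio (2 * aseq a α i)).indicator
      (fun _ => ENNReal.ofReal (normConst a α * aseq a α i ^ (-α))) t := by
  obtain ⟨m, hm, htail⟩ := hF.exists_tail_le h t
  have hterm : ∀ i, 0 ≤ normConst a α * aseq a α i ^ (-α) := fun i =>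
    mul_nonneg h.normConst_pos.le (rpow_pos_of_pos (h.aseq_pos i) _).le
  calc μ (Ioi t) = ENNReal.ofReal (tail μ t) := (ofReal_tail μ t).symm
    _ ≤ ENNReal.ofReal (normConst a α * tailSum a α m) := ENNReal.ofReal_le_ofReal htail
    _ = ∑' i, ENNReal.ofReal (normConst a α * aseq a α (m + i) ^ (-α)) := by
        rw [tailSum, ← tsum_mul_left,
          ENNReal.ofReal_tsum_of_nonneg (fun i => hterm _) ((h.summable_tailSum m).mul_left _)]
    _ = ∑' i, (Iio (2 * aseq a α (m + i))).indicator
          (fun _ => ENNReal.ofReal (normConst a α * aseq a α (m + i) ^ (-α))) t := by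
        refine tsum_congr fun i => ?_
        rw [indicator_of_mem (show t ∈ Iio (2 * aseq a α (m + i)) from
          hm.trans_le (by linarith [h.aseq_mono (m.le_add_right i)]))]
    _ ≤ _ := ENNReal.tsum_comp_le_tsum_of_injective (add_right_injective m) _

lemma integrable_id [IsProbabilityMeasure μ] (hF : TailFormula α a μ) (h : Admissible α a)
    (hs : μ (Iio 0) = 0) : Integrable (fun y : ℝ => y) μ := by
  have hnn : ∀ᵐ y ∂μ, 0 ≤ y := by
    filter_upwards [measure_eq_zero_iff_ae_notMem.1 hs] with y hy using not_lt.1 hy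
  have hterm : ∀ i, 0 ≤ normConst a α * aseq a α i ^ (-α) := fun i =>
    mul_nonneg h.normConst_pos.le (rpow_pos_of_pos (h.aseq_pos i) _).le
  refine ⟨aestronglyMeasurable_id, (hasFiniteIntegral_iff_ofReal hnn).2 ?_⟩
  refine (lintegral_ofReal_le_tsum_of_meas_Ioi_le μ hnn _ _
    fun t _ => hF.meas_Ioi_le_tsum_indicator h t).trans_lt ?_
  simp_rw [← ENNReal.ofReal_mul (hterm _)]
  rw [← ENNReal.ofReal_tsum_of_nonneg (fun i => mul_nonneg (hterm i) (by linarith [h.aseq_pos i]))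
    ((h.summable_aseq_mul_rpow_neg.mul_left (2 * normConst a α)).congr fun i => by ring)]
  exact ENNReal.ofReal_lt_top

lemma tail_sub_le [IsFiniteMeasure μ] (hF : TailFormula α a μ) (h : Admissible α a) {n : ℕ}
    {x : ℝ} (hx1 : aseq a α (n + 1) ≤ x) (hx2 : x < aseq a α (n + 2)) {b : ℝ} (hb : b ≤ x / 2) :
    tail μ (x - b) ≤ 2 * (1 + |b|) * tail μ x := by
  have hC := h.normConst_pos
  have hX := hF (n + 1) x hx1 hx2
  have hDS : normConst a α * aseq a α (n + 1) ^ (-(α + 1)) ≤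
      normConst a α * tailSum a α (n + 1 + 1) := by
    rw [← h.aseq_succ_rpow_neg]
    exact mul_le_mul_of_nonneg_left (h.rpow_neg_le_tailSum _) hC.le
  set A := aseq a α (n + 1)
  set D := normConst a α * A ^ (-(α + 1))
  have hA : 0 < A := h.aseq_pos (n + 1)
  have hD : 0 ≤ D := mul_nonneg hC.le (rpow_pos_of_pos hA _).le
  have hXD : D ≤ tail μ x := by nlinarith [le_max_right (2 * A - x) 0]
  rcases lt_or_ge b 0 with hb0 | hb0
  · have := tail_antitone μ (by linarith : x ≤ x - b)
    nlinarith [abs_nonneg b]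
  rw [abs_of_nonneg hb0]
  rcases le_or_gt A (x - b) with hAb | hAb
  · rw [hF (n + 1) (x - b) hAb (by linarith)]
    have : max (2 * A - (x - b)) 0 ≤ max (2 * A - x) 0 + b :=
      max_le (by linarith [le_max_left (2 * A - x) 0]) (by linarith [le_max_right (2 * A - x) 0])
    nlinarith
  · have hT : tail μ (x - b) ≤ 2 * A * D :=
      calc tail μ (x - b) ≤ normConst a α * tailSum a α (n + 1) :=
            hF.tail_le_of_two_mul_aseq_le h (by linarith [h.eight_mul_aseq_le n, h.aseq_pos n])
        _ ≤ normConst a α * (2 * A ^ (-α)) := mul_le_mul_of_nonneg_left (h.tailSum_le _) hC.le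
        _ = 2 * A * D := by rw [← h.rpow_neg_succ_mul_aseq]; ring
    -- `b ≥ x - A`, so `A D = D (2A - x) + D (x - A) ≤ F̄(x) + b F̄(x)`
    have hXm : D * (2 * A - x) ≤ tail μ x := by
      nlinarith [le_max_left (2 * A - x) 0, h.tailSum_nonneg (n + 2)]
    nlinarith [mul_le_mul_of_nonneg_left hXD hb0, mul_le_mul_of_nonneg_right hAb.le hD]

lemma memOS [IsProbabilityMeasure μ] (hF : TailFormula α a μ) (h : Admissible α a)
    (hs : μ (Iio 0) = 0) : MemOS μ := by
  refine memOS_of_tail_sub_le μ (hF.integrable_id h hs) zero_le_two ?_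
  filter_upwards [eventually_ge_atTop (aseq a α 1)] with x hx b hb
  obtain ⟨n, hn1, hn2⟩ :=
    exists_le_lt_succ_of_tendsto ((tendsto_add_atTop_iff_nat 1).2 h.tendsto_aseq) hx
  exact hF.tail_sub_le h hn1 hn2 hb

lemma tendsto_tail_ratio (hF : TailFormula α a μ) (h : Admissible α a) :
    Tendsto (fun n => tail μ (2 * aseq a α n - 1) / tail μ (2 * aseq a α n)) atTop (𝓝 2) := by
  have hratio : ∀ n, tail μ (2 * aseq a α n - 1) / tail μ (2 * aseq a α n) =
      1 + (tailSum a α (n + 1) / aseq a α (n + 1) ^ (-α))⁻¹ := by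
    intro n
    have := rpow_pos_of_pos (h.aseq_pos (n + 1)) (-α)
    rw [hF.tail_two_mul_aseq_sub_one h, hF.tail_two_mul_aseq h, inv_div]
    field_simp [h.normConst_pos.ne', (h.tailSum_pos (n + 1)).ne']
  have hlim := (((tendsto_add_atTop_iff_nat 1).2 h.tendsto_tailSum_div_rpow_neg).inv₀
    one_ne_zero).const_add 1
  rw [inv_one, one_add_one_eq_two] at hlim
  simpa only [hratio] using hlim

end TailFormula

end OSNotLongTailed

theorem stmt19_general (α a : ℝ) (hα1 : 3 / 2 < α)
    (ha : 1 < a) (ha' : 8 * a < a ^ (1 + 1 / α))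
    (F0 : Measure ℝ) [IsProbabilityMeasure F0] (hs : F0 (Set.Iio 0) = 0) :
    let r : ℝ := 1 + 1 / α
    let aseq : ℕ → ℝ := fun n => a ^ (r ^ n)
    let C : ℝ := (∑' n : ℕ, aseq n ^ (-α))⁻¹
    (∀ x : ℝ, x < aseq 0 → tail F0 x = 1) →
    (∀ n : ℕ, ∀ x : ℝ, aseq n ≤ x → x < 2 * aseq n →
      tail F0 x = (∑' i : ℕ, C * aseq (n + i) ^ (-α)) - C * aseq n ^ (-(α + 1)) * (x - aseq n)) →
    (∀ n : ℕ, ∀ x : ℝ, 2 * aseq n ≤ x → x < aseq (n + 1) →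
      tail F0 x = ∑' i : ℕ, C * aseq (n + 1 + i) ^ (-α)) →
    (MeasureTheory.Integrable (fun y : ℝ => y) F0 ∧
      Filter.Tendsto (fun n : ℕ => tail F0 (2 * aseq n - 1) / tail F0 (2 * aseq n))
        Filter.atTop (nhds 2) ∧
      (¬ ∀ t > (0 : ℝ),
        Filter.Tendsto (fun x => tail F0 (x - t) / tail F0 x) Filter.atTop (nhds 1)) ∧
      MemOS F0) := by
  intro r aseq C _ hlin hconst
  have h : OSNotLongTailed.Admissible α a := ⟨by linarith, ha, ha'⟩
  have hF : OSNotLongTailed.TailFormula α a F0 := .of_pieces h hlin hconst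
  have hratio := hF.tendsto_tail_ratio h
  refine ⟨hF.integrable_id h hs, hratio, fun hL => ?_, hF.memOS h hs⟩
  have hto_one := (hL 1 one_pos).comp (h.tendsto_aseq.const_mul_atTop two_pos)
  exact absurd (tendsto_nhds_unique hto_one hratio) (by norm_num)

theorem stmt19 (α a : ℝ) (hα1 : 3 / 2 < α) (hα2 : α < (Real.sqrt 5 + 1) / 2)
    (ha : 1 < a) (ha' : 8 * a < a ^ (1 + 1 / α))
    (F0 : Measure ℝ) [IsProbabilityMeasure F0] (hs : F0 (Set.Iio 0) = 0) :
    let r : ℝ := 1 + 1 / α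
    let aseq : ℕ → ℝ := fun n => a ^ (r ^ n)
    let C : ℝ := (∑' n : ℕ, aseq n ^ (-α))⁻¹
    (∀ x : ℝ, x < aseq 0 → tail F0 x = 1) →
    (∀ n : ℕ, ∀ x : ℝ, aseq n ≤ x → x < 2 * aseq n →
      tail F0 x = (∑' i : ℕ, C * aseq (n + i) ^ (-α)) - C * aseq n ^ (-(α + 1)) * (x - aseq n)) →
    (∀ n : ℕ, ∀ x : ℝ, 2 * aseq n ≤ x → x < aseq (n + 1) →
      tail F0 x = ∑' i : ℕ, C * aseq (n + 1 + i) ^ (-α)) →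
    (MeasureTheory.Integrable (fun y : ℝ => y) F0 ∧
      Filter.Tendsto (fun n : ℕ => tail F0 (2 * aseq n - 1) / tail F0 (2 * aseq n))
        Filter.atTop (nhds 2) ∧
      (¬ ∀ t > (0 : ℝ),
        Filter.Tendsto (fun x => tail F0 (x - t) / tail F0 x) Filter.atTop (nhds 1)) ∧
      MemOS F0) :=
  stmt19_general α a hα1 ha ha' F0 hs
end
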